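/- Let $0 < s < \min\{1, N/2\}$, let $a_0 > 0$ be constant, and let $f \in C^1(\mathbb{R})$ with subcritical growth. Suppose there exists $0 \le \delta \le 2s/(N-2s)$ such that $2_s^* F(t) \le f(t)t + \delta a_0 t^2$ for all $t \in \mathbb{R}$. If $u \in H^s(\mathbb{R}^N)$ is a weak solution of $(-\Delta)^s u + a_0 u = f(u)$ satisfying the Pohozaev identity $\int F(u) - \frac{a_0}{2}u^2\,dx = \frac{N-2s}{2N}\int |(-\Delta)^{s/2}u|^2\,dx$, then $u \equiv 0$. -/

import Mathlib

open MeasureTheory Real Filter Topology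
open scoped FourierTransform ENNReal NNReal

noncomputable section

abbrev Esp (N : ℕ) := EuclideanSpace ℝ (Fin N)

def cplx {N : ℕ} (u : Esp N → ℝ) : Esp N → ℂ := fun x => (u x : ℂ)

/-- homogeneous fractional Sobolev seminorm squared, `[u]_s² = ∫ |ξ|^{2s} |𝓕u|²`. -/
def fracSq (N : ℕ) (s : ℝ) (u : Esp N → ℝ) : ℝ :=
  ∫ ξ : Esp N, ‖ξ‖ ^ (2 * s) * ‖𝓕 (cplx u) ξ‖ ^ 2

/-- the `H^s` inner product `(u,v) = ∫ (1+|ξ|^{2s}) 𝓕u conj(𝓕v)` (real part). -/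
def hsInner (N : ℕ) (s : ℝ) (u v : Esp N → ℝ) : ℝ :=
  (∫ ξ : Esp N, (((1 + ‖ξ‖ ^ (2 * s) : ℝ)) : ℂ) *
      (𝓕 (cplx u) ξ * (starRingEnd ℂ) (𝓕 (cplx v) ξ))).re

/-- the `H^s` norm squared. -/
def hsNormSq (N : ℕ) (s : ℝ) (u : Esp N → ℝ) : ℝ :=
  fracSq N s u + ∫ x : Esp N, u x ^ 2

/-- membership in the inhomogeneous fractional Sobolev space `H^s(ℝ^N)`. -/
def MemHs (N : ℕ) (s : ℝ) (u : Esp N → ℝ) : Prop :=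
  MemLp u 2 (volume : Measure (Esp N)) ∧
    Integrable (fun ξ : Esp N => ‖ξ‖ ^ (2 * s) * ‖𝓕 (cplx u) ξ‖ ^ 2) volume

/-- the fractional Dirichlet pairing `[u,v]_s = ∫ (-Δ)^{s/2}u (-Δ)^{s/2}v`. -/
def fracInner (N : ℕ) (s : ℝ) (u v : Esp N → ℝ) : ℝ :=
  (∫ ξ : Esp N, ((‖ξ‖ ^ (2 * s) : ℝ) : ℂ) *
      (𝓕 (cplx u) ξ * (starRingEnd ℂ) (𝓕 (cplx v) ξ))).re

/-- primitive of an autonomous nonlinearity. -/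
def F0 (f : ℝ → ℝ) (t : ℝ) : ℝ := ∫ τ in (0 : ℝ)..t, f τ

/-!
Writing `P = 2N/(N-2s)`, the hypothesis on `F` with `δ ≤ (P-2)/2` says that
`(F(t) - a₀t²/2) |t|^{-P}` is nondecreasing in `|t|` on each half-line; subcritical growth makes it
tend to `0` at infinity, so `F(t) ≤ a₀t²/2`. The Pohozaev identity then forces `[u]_s = 0`,
i.e. `𝓕u = 0` a.e., and Fourier injectivity on `L¹` gives `u = 0`.

Since `𝓕` is the Fourier integral, it only sees `u` when `u ∈ L¹`. Otherwise `𝓕u = 0` by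
convention, so a test function `v` with `|v| = |u|` is admissible; choosing its sign as that of
`a₀u - f(u)` shows `f(u) = a₀u` a.e. As `f(t) = o(t)` at `0`, `|u|` is a.e. either `0` or
bounded below, and then `u ∈ L²` implies `u ∈ L¹` after all.
-/

open Asymptotics
open scoped SchwartzMap

lemma isLittleO_rpow_rpow_atTop {p q : ℝ} (hpq : p < q) :
    (fun t : ℝ => t ^ p) =o[atTop] fun t => t ^ q := by
  refine (isLittleO_iff_tendsto' ?_).2 ?_
  · filter_upwards [eventually_gt_atTop 0] with t ht h
    exact absurd h (rpow_pos_of_pos ht q).ne'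
  · refine (tendsto_rpow_neg_atTop (sub_pos.2 hpq)).congr' ?_
    filter_upwards [eventually_gt_atTop 0] with t ht
    rw [← rpow_sub ht, neg_sub]

lemma nonpos_of_hasDerivAt_of_mul_le {G g : ℝ → ℝ} {p : ℝ}
    (hG : ∀ t, 0 < t → HasDerivAt G (g t) t) (hineq : ∀ t, 0 < t → p * G t ≤ g t * t)
    (hlim : G =o[atTop] fun t => t ^ p) {t : ℝ} (ht : 0 < t) : G t ≤ 0 := by
  set H : ℝ → ℝ := fun t => G t * t ^ (-p)
  have hH : ∀ t, 0 < t → HasDerivAt H (t ^ (-p - 1) * (g t * t - p * G t)) t := by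
    intro t ht
    refine ((hG t ht).mul (hasDerivAt_rpow_const (p := -p) (Or.inl ht.ne'))).congr_deriv ?_
    rw [show t ^ (-p) = t ^ (-p - 1) * t by rw [← rpow_add_one ht.ne']; ring_nf]
    ring
  have hmono : MonotoneOn H (Set.Ioi 0) := by
    refine monotoneOn_of_hasDerivWithinAt_nonneg (convex_Ioi 0)
      (f' := fun τ => τ ^ (-p - 1) * (g τ * τ - p * G τ))
      (fun τ hτ => (hH τ hτ).continuousAt.continuousWithinAt) (fun τ hτ => ?_) (fun τ hτ => ?_)
      <;> rw [interior_Ioi] at hτ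
    · exact (hH τ hτ).hasDerivWithinAt
    · exact mul_nonneg (rpow_pos_of_pos hτ _).le (sub_nonneg.2 (hineq τ hτ))
  have hHlim : Tendsto H atTop (𝓝 0) := by
    refine hlim.tendsto_div_nhds_zero.congr' ?_
    filter_upwards [eventually_gt_atTop 0] with τ hτ
    simp only [H, rpow_neg hτ.le, div_eq_mul_inv]
  have hHt : H t ≤ 0 := ge_of_tendsto hHlim <| by
    filter_upwards [eventually_ge_atTop t] with τ hτ
    exact hmono ht (ht.trans_le hτ) hτ
  exact nonpos_of_mul_nonpos_left hHt (rpow_pos_of_pos ht _)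

lemma hasDerivAt_F0 {f : ℝ → ℝ} (hf : Continuous f) (t : ℝ) : HasDerivAt (F0 f) (f t) t :=
  (hf.integral_hasStrictDerivAt 0 t).hasDerivAt

lemma F0_neg_comp_neg (f : ℝ → ℝ) (t : ℝ) : F0 (fun τ => -f (-τ)) t = F0 f (-t) := by
  simp [F0, intervalIntegral.integral_comp_neg, intervalIntegral.integral_symm (-t)]

def SubcriticalGrowth (P : ℝ) (f : ℝ → ℝ) : Prop :=
  ∀ ε : ℝ, 0 < ε → ∃ C : ℝ, 0 < C ∧ ∃ p : ℝ, 2 < p ∧ p < P ∧ ∀ t : ℝ,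
    |f t| ≤ ε * (|t| + |t| ^ (P - 1)) + C * |t| ^ (p - 1)

namespace SubcriticalGrowth

variable {P : ℝ} {f : ℝ → ℝ}

lemma neg_comp_neg (hf : SubcriticalGrowth P f) : SubcriticalGrowth P fun t => -f (-t) := by
  intro ε hε
  obtain ⟨C, hC, p, hp, hpP, hbound⟩ := hf ε hε
  exact ⟨C, hC, p, hp, hpP, fun t => by simpa using hbound (-t)⟩

lemma isLittleO_F0 (hf : SubcriticalGrowth P f) (hP : 2 < P) :
    F0 f =o[atTop] fun t => t ^ P := by
  refine IsLittleO.of_bound fun c hc => ?_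
  obtain ⟨C, hC, p, hp, hpP, hbound⟩ := hf (c / 3) (by positivity)
  filter_upwards [(isLittleO_rpow_rpow_atTop hpP).bound (show 0 < c / 3 / C by positivity),
    eventually_ge_atTop 1] with t htp ht1
  have ht0 : 0 < t := by linarith
  have hF : |F0 f t| ≤ (c / 3 * (t + t ^ (P - 1)) + C * t ^ (p - 1)) * t := by
    have := intervalIntegral.norm_integral_le_of_norm_le_const (a := 0) (b := t) (f := f)
      (C := c / 3 * (t + t ^ (P - 1)) + C * t ^ (p - 1)) fun τ hτ => by
        rw [Set.uIoc_of_le ht0.le] at hτ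
        rw [Real.norm_eq_abs]
        refine (hbound τ).trans ?_
        rw [abs_of_pos hτ.1]
        gcongr <;> linarith [hτ.1, hτ.2]
    simpa [F0, abs_of_pos ht0] using this
  have h2P : t ^ 2 ≤ t ^ P := by
    simpa [rpow_two] using rpow_le_rpow_of_exponent_le ht1 hP.le
  rw [norm_of_nonneg (rpow_pos_of_pos ht0 p).le, norm_of_nonneg (rpow_pos_of_pos ht0 P).le]
    at htp
  rw [Real.norm_eq_abs, norm_of_nonneg (rpow_pos_of_pos ht0 P).le]
  have hsplit : (c / 3 * (t + t ^ (P - 1)) + C * t ^ (p - 1)) * t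
      = c / 3 * t ^ 2 + c / 3 * t ^ P + C * t ^ p := by
    rw [rpow_sub_one ht0.ne', rpow_sub_one ht0.ne']
    field_simp
  have hCp : C * t ^ p ≤ c / 3 * t ^ P := by
    calc C * t ^ p ≤ C * (c / 3 / C * t ^ P) := by gcongr
      _ = c / 3 * t ^ P := by field_simp
  nlinarith

lemma F0_le_of_pos (hf : SubcriticalGrowth P f) (hcont : Continuous f) (hP : 2 < P) {c : ℝ}
    (hineq : ∀ t, P * F0 f t ≤ f t * t + (P - 2) * c * t ^ 2) {t : ℝ} (ht : 0 < t) :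
    F0 f t ≤ c * t ^ 2 := by
  have hsq : (fun t : ℝ => c * t ^ 2) =o[atTop] fun t => t ^ P := by
    simpa [rpow_two] using (isLittleO_rpow_rpow_atTop hP).const_mul_left c
  have := nonpos_of_hasDerivAt_of_mul_le (G := fun t => F0 f t - c * t ^ 2)
    (g := fun t => f t - c * (2 * t)) (p := P)
    (fun t _ => (hasDerivAt_F0 hcont t).sub (by simpa using (hasDerivAt_pow 2 t).const_mul c))
    (fun t _ => by nlinarith [hineq t]) ((hf.isLittleO_F0 hP).sub hsq) ht
  linarith

lemma F0_le (hf : SubcriticalGrowth P f) (hcont : Continuous f) (hP : 2 < P) {c : ℝ}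
    (hineq : ∀ t, P * F0 f t ≤ f t * t + (P - 2) * c * t ^ 2) (t : ℝ) :
    F0 f t ≤ c * t ^ 2 := by
  rcases lt_trichotomy t 0 with ht | rfl | ht
  · have hineq' : ∀ τ, P * F0 (fun τ => -f (-τ)) τ ≤ -f (-τ) * τ + (P - 2) * c * τ ^ 2 := by
      intro τ
      simpa [F0_neg_comp_neg] using hineq (-τ)
    simpa [F0_neg_comp_neg] using
      hf.neg_comp_neg.F0_le_of_pos (hcont.comp continuous_neg).neg hP hineq' (neg_pos.2 ht)
  · simp [F0]
  · exact hf.F0_le_of_pos hcont hP hineq ht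

lemma isLittleO_id (hf : SubcriticalGrowth P f) (hP : 2 < P) : f =o[𝓝 0] id := by
  refine IsLittleO.of_bound fun c hc => ?_
  obtain ⟨C, hC, p, hp, hpP, hbound⟩ := hf (c / 2) (by positivity)
  set h : ℝ → ℝ := fun t => c / 2 * (1 + |t| ^ (P - 2)) + C * |t| ^ (p - 2)
  have hcont : Continuous h := by
    have := continuous_abs.rpow_const (p := P - 2) fun _ => Or.inr (by linarith)
    have := continuous_abs.rpow_const (p := p - 2) fun _ => Or.inr (by linarith)
    fun_prop
  have h0 : h 0 < c := by
    simp [h, zero_rpow (by linarith : P - 2 ≠ 0), zero_rpow (by linarith : p - 2 ≠ 0)]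
    linarith
  filter_upwards [hcont.continuousAt.eventually_lt continuousAt_const h0] with t ht
  have hpow : ∀ q : ℝ, 2 < q → |t| ^ (q - 1) = |t| ^ (q - 2) * |t| := fun q hq => by
    rw [← rpow_add_one' (abs_nonneg t) (by linarith)]
    ring_nf
  calc ‖f t‖ = |f t| := Real.norm_eq_abs _
    _ ≤ c / 2 * (|t| + |t| ^ (P - 1)) + C * |t| ^ (p - 1) := hbound t
    _ = h t * |t| := by rw [hpow P hP, hpow p hp]; ring
    _ ≤ c * ‖id t‖ := by rw [id, Real.norm_eq_abs]; gcongr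

lemma exists_eq_zero_of_eq_mul (hf : SubcriticalGrowth P f) (hP : 2 < P) {a : ℝ} (ha : a ≠ 0) :
    ∃ r > 0, ∀ t, |t| < r → f t = a * t → t = 0 := by
  obtain ⟨r, hr, hball⟩ :=
    Metric.eventually_nhds_iff.1 ((hf.isLittleO_id hP).bound (half_pos (abs_pos.2 ha)))
  refine ⟨r, hr, fun t ht heq => ?_⟩
  have := hball (show dist t 0 < r by simpa using ht)
  rw [heq, id, norm_mul, Real.norm_eq_abs, Real.norm_eq_abs] at this
  exact abs_nonpos_iff.1 (nonpos_of_mul_nonpos_right (by linarith) (abs_pos.2 ha))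

end SubcriticalGrowth

section Fourier

variable {V E : Type*} [NormedAddCommGroup V] [InnerProductSpace ℝ V] [FiniteDimensional ℝ V]
  [MeasurableSpace V] [BorelSpace V]

lemma fourier_eq_zero_of_not_integrable [NormedAddCommGroup E] [NormedSpace ℂ E] {w : V → E}
    (hw : ¬ Integrable w) : 𝓕 w = 0 := by
  ext ξ
  exact integral_undef (mt (Real.fourierIntegral_convergent_iff ξ).1 hw)

lemma ae_eq_zero_of_fourier_ae_eq_zero {u : V → ℂ} (hu : Integrable u) (h : 𝓕 u =ᵐ[volume] 0) :
    u =ᵐ[volume] 0 := by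
  refine ae_eq_zero_of_integral_contDiff_smul_eq_zero hu.locallyIntegrable fun g hg hgs => ?_
  let G : 𝓢(V, ℂ) := (hgs.comp_left Complex.ofReal_zero).toSchwartzMap
    (Complex.ofRealCLM.contDiff.comp hg)
  let H : 𝓢(V, ℂ) := 𝓕⁻ G
  have hFH : 𝓕 (H : V → ℂ) = fun x => (g x : ℂ) := by
    rw [← SchwartzMap.fourier_coe, FourierTransform.fourier_fourierInv_eq]
    rfl
  have hswap := VectorFourier.integral_fourierIntegral_smul_eq_flip (L := innerₗ V)
    Real.continuous_fourierChar continuous_inner hu (H.integrable (μ := volume))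
  rw [flip_innerₗ] at hswap
  calc ∫ x, g x • u x = ∫ x, u x • 𝓕 (H : V → ℂ) x := by
        simp [hFH, Complex.real_smul, mul_comm]
    _ = ∫ ξ, 𝓕 u ξ • H ξ := hswap.symm
    _ = 0 := by
        rw [integral_eq_zero_of_ae]
        filter_upwards [h] with ξ hξ
        simp [hξ]

end Fourier

section FractionalSobolev

variable {N : ℕ} {s : ℝ}

lemma integrable_of_integrable_cplx {u : Esp N → ℝ} (hu : Integrable (cplx u)) : Integrable u := by
  simpa [cplx] using hu.re

lemma fracSq_nonneg (u : Esp N → ℝ) : 0 ≤ fracSq N s u :=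
  integral_nonneg fun ξ => by positivity

lemma fracInner_self (u : Esp N → ℝ) : fracInner N s u u = fracSq N s u := by
  simp_rw [fracInner, fracSq, Complex.mul_conj, Complex.normSq_eq_norm_sq]
  norm_cast

lemma fracInner_eq_zero_of_fourier_ae_eq_zero {u : Esp N → ℝ} (hu : 𝓕 (cplx u) =ᵐ[volume] 0)
    (v : Esp N → ℝ) : fracInner N s u v = 0 := by
  rw [fracInner, integral_eq_zero_of_ae]
  · simp
  filter_upwards [hu] with ξ hξ
  simp [hξ]

lemma memHs_of_not_integrable {v : Esp N → ℝ} (hv : MemLp v 2 volume) (hv1 : ¬ Integrable v) :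
    MemHs N s v := by
  refine ⟨hv, ?_⟩
  simp [fourier_eq_zero_of_not_integrable (mt integrable_of_integrable_cplx hv1)]

lemma fourier_ae_eq_zero_of_fracSq_eq_zero (hN : 0 < N) {u : Esp N → ℝ} (hu : MemHs N s u)
    (h : fracSq N s u = 0) : 𝓕 (cplx u) =ᵐ[volume] 0 := by
  have : Nontrivial (Esp N) := by
    apply Module.nontrivial_of_finrank_pos (R := ℝ)
    simpa using hN
  have hweighted := (integral_eq_zero_iff_of_nonneg (fun ξ => by positivity) hu.2).1 h
  filter_upwards [hweighted, volume.ae_ne 0] with ξ hξ hξ0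
  have hpos : 0 < ‖ξ‖ ^ (2 * s) := rpow_pos_of_pos (norm_pos_iff.2 hξ0) _
  simpa [hpos.ne'] using hξ

lemma ae_eq_zero_of_fracSq_eq_zero (hN : 0 < N) {u : Esp N → ℝ} (hu : MemHs N s u)
    (hu1 : Integrable u) (h : fracSq N s u = 0) : u =ᵐ[volume] 0 := by
  filter_upwards [ae_eq_zero_of_fourier_ae_eq_zero hu1.ofReal
    (fourier_ae_eq_zero_of_fracSq_eq_zero hN hu h)] with x hx
  simpa [cplx] using hx

end FractionalSobolev

lemma MeasureTheory.MemLp.integrable_of_ae_eq_zero_or_le_abs {α : Type*} [MeasurableSpace α]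
    {μ : Measure α} {u : α → ℝ} (hu : MemLp u 2 μ) {r : ℝ} (hr : 0 < r)
    (h : ∀ᵐ x ∂μ, u x = 0 ∨ r ≤ |u x|) : Integrable u μ := by
  refine (hu.integrable_sq.const_mul r⁻¹).mono' hu.aestronglyMeasurable ?_
  filter_upwards [h] with x hx
  rw [Real.norm_eq_abs, ← sq_abs, le_inv_mul_iff₀ hr]
  rcases hx with hx | hx
  · simp [hx]
  · nlinarith [abs_nonneg (u x)]

def IsWeakSolution (N : ℕ) (s a₀ : ℝ) (f : ℝ → ℝ) (u : Esp N → ℝ) : Prop :=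
  ∀ v : Esp N → ℝ, MemHs N s v →
    fracInner N s u v + a₀ * ∫ x : Esp N, u x * v x = ∫ x : Esp N, f (u x) * v x

namespace IsWeakSolution

variable {N : ℕ} {s a₀ : ℝ} {f : ℝ → ℝ} {u : Esp N → ℝ}

lemma ae_eq_zero_of_not_integrable_mul (hsol : IsWeakSolution N s a₀ f u) (ha₀ : 0 < a₀)
    (hu : MemHs N s u) (hT : ¬ Integrable fun x => f (u x) * u x) : u =ᵐ[volume] 0 := by
  have hnehari := hsol u hu
  -- the right-hand side of the Nehari identity is `0` by the junk value of `∫`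
  rw [fracInner_self, integral_undef hT] at hnehari
  have hsq : ∫ x, u x ^ 2 = 0 := by
    simp_rw [← sq] at hnehari
    have : 0 ≤ ∫ x, u x ^ 2 := by positivity
    nlinarith [fracSq_nonneg (s := s) u]
  filter_upwards [(integral_eq_zero_iff_of_nonneg (f := fun x => u x ^ 2)
    (fun x => sq_nonneg (u x)) hu.1.integrable_sq).1 hsq] with x hx
  simpa using hx

lemma integral_mul_comp_eq_of_not_integrable (hsol : IsWeakSolution N s a₀ f u)
    (hu : MemHs N s u) (hu1 : ¬ Integrable u) {θ : ℝ → ℝ} (hθ : Measurable θ)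
    (habs : ∀ t, |θ t| = |t|) :
    a₀ * ∫ x, u x * θ (u x) = ∫ x, f (u x) * θ (u x) := by
  have hθu : AEStronglyMeasurable (fun x => θ (u x)) volume :=
    (hθ.comp_aemeasurable hu.1.aestronglyMeasurable.aemeasurable).aestronglyMeasurable
  have hv : MemLp (fun x => θ (u x)) 2 volume :=
    hu.1.of_le hθu (ae_of_all _ fun x => by simp [habs])
  have hv1 : ¬ Integrable fun x => θ (u x) := fun hint =>
    hu1 (hint.mono hu.1.aestronglyMeasurable (ae_of_all _ fun x => by simp [habs]))
  have hfourier : 𝓕 (cplx u) =ᵐ[volume] 0 := by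
    rw [fourier_eq_zero_of_not_integrable (mt integrable_of_integrable_cplx hu1)]
  simpa [fracInner_eq_zero_of_fourier_ae_eq_zero hfourier] using
    hsol _ (memHs_of_not_integrable hv hv1)

lemma ae_eq_mul_or_eq_zero_of_not_integrable (hsol : IsWeakSolution N s a₀ f u)
    (hf : Continuous f) (hu : MemHs N s u) (hu1 : ¬ Integrable u)
    (hT : Integrable fun x => f (u x) * u x) :
    ∀ᵐ x, f (u x) = a₀ * u x ∨ u x = 0 := by
  set θ : ℝ → ℝ := fun t => if 0 ≤ a₀ * t - f t then |t| else -|t|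
  have hθ : Measurable θ :=
    Measurable.ite (measurableSet_le measurable_const (by fun_prop)) (by fun_prop) (by fun_prop)
  have habs : ∀ t, |θ t| = |t| := fun t => by unfold θ; split_ifs <;> simp
  have hθmul : ∀ t, (a₀ * t - f t) * θ t = |a₀ * t - f t| * |t| := fun t => by
    unfold θ
    split_ifs with h
    · rw [abs_of_nonneg h]
    · rw [abs_of_neg (not_le.1 h)]; ring
  have hθu : AEStronglyMeasurable (fun x => θ (u x)) volume :=
    (hθ.comp_aemeasurable hu.1.aestronglyMeasurable.aemeasurable).aestronglyMeasurable
  have huθ : Integrable fun x => u x * θ (u x) :=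
    hu.1.integrable_sq.mono (hu.1.aestronglyMeasurable.mul hθu)
      (ae_of_all _ fun x => by simp [habs, sq])
  have hfθ : Integrable fun x => f (u x) * θ (u x) :=
    hT.mono ((hf.comp_aestronglyMeasurable hu.1.aestronglyMeasurable).mul hθu)
      (ae_of_all _ fun x => by simp [habs])
  have hsplit : (fun x => a₀ * (u x * θ (u x)) - f (u x) * θ (u x))
      = fun x => |a₀ * u x - f (u x)| * |u x| := by
    ext x
    rw [← hθmul]
    ring
  have hint : Integrable fun x => |a₀ * u x - f (u x)| * |u x| :=
    hsplit ▸ (huθ.const_mul a₀).sub hfθ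
  have hzero : ∫ x, |a₀ * u x - f (u x)| * |u x| = 0 := by
    rw [← hsplit, integral_sub (huθ.const_mul a₀) hfθ, integral_const_mul,
      hsol.integral_mul_comp_eq_of_not_integrable hu hu1 hθ habs, sub_self]
  filter_upwards [(integral_eq_zero_iff_of_nonneg (fun x => by positivity) hint).1 hzero]
    with x hx
  simpa [sub_eq_zero, eq_comm] using hx

lemma integrable {P : ℝ} (hsol : IsWeakSolution N s a₀ f u) (hf : Continuous f)
    (hgrowth : SubcriticalGrowth P f) (hP : 2 < P) (ha₀ : a₀ ≠ 0) (hu : MemHs N s u)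
    (hT : Integrable fun x => f (u x) * u x) : Integrable u := by
  by_contra hu1
  obtain ⟨r, hr, hgap⟩ := hgrowth.exists_eq_zero_of_eq_mul hP ha₀
  refine hu1 (hu.1.integrable_of_ae_eq_zero_or_le_abs hr ?_)
  filter_upwards [hsol.ae_eq_mul_or_eq_zero_of_not_integrable hf hu hu1 hT] with x hx
  by_contra! h
  exact h.1 (hx.elim (hgap _ h.2) id)

end IsWeakSolution

theorem nonexistence_constant_potential_general
    (N : ℕ) (s : ℝ) (hN : 0 < N) (hs : 0 < s) (hsN : 2 * s < (N : ℝ))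
    (a₀ : ℝ) (ha₀ : 0 < a₀)
    (f : ℝ → ℝ) (hf : ContDiff ℝ 1 f)
    (hgrowth : ∀ ε : ℝ, 0 < ε → ∃ C : ℝ, 0 < C ∧
      ∃ p : ℝ, 2 < p ∧ p < 2 * N / ((N : ℝ) - 2 * s) ∧ ∀ t : ℝ,
        |f t| ≤ ε * (|t| + |t| ^ (2 * N / ((N : ℝ) - 2 * s) - 1)) + C * |t| ^ (p - 1))
    (δ : ℝ) (hδ : δ ≤ 2 * s / ((N : ℝ) - 2 * s))
    (hineq : ∀ t : ℝ, (2 * N / ((N : ℝ) - 2 * s)) * F0 f t ≤ f t * t + δ * a₀ * t ^ 2)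
    (u : Esp N → ℝ) (hu : MemHs N s u)
    (hsol : ∀ v : Esp N → ℝ, MemHs N s v →
      fracInner N s u v + a₀ * ∫ x : Esp N, u x * v x = ∫ x : Esp N, f (u x) * v x)
    (hpoh : ∫ x : Esp N, (F0 f (u x) - a₀ / 2 * u x ^ 2)
        = ((N : ℝ) - 2 * s) / (2 * N) * fracSq N s u) :
    u =ᵐ[(volume : Measure (Esp N))] (fun _ => (0 : ℝ)) := by
  set P : ℝ := 2 * N / ((N : ℝ) - 2 * s)
  have hNs : 0 < (N : ℝ) - 2 * s := by linarith
  have hP2 : (P - 2) / 2 = 2 * s / ((N : ℝ) - 2 * s) := by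
    simp only [P]
    field_simp
    ring
  have hP : 2 < P := by linarith [div_pos (by linarith : 0 < 2 * s) hNs]
  have hsol : IsWeakSolution N s a₀ f u := hsol
  have hgrowth : SubcriticalGrowth P f := hgrowth
  by_cases hT : Integrable fun x => f (u x) * u x
  swap
  · exact hsol.ae_eq_zero_of_not_integrable_mul ha₀ hu hT
  have hu1 : Integrable u := hsol.integrable hf.continuous hgrowth hP ha₀.ne' hu hT
  have hF : ∀ t, F0 f t ≤ a₀ / 2 * t ^ 2 := hgrowth.F0_le hf.continuous hP fun t => by
    nlinarith [hineq t, mul_le_mul_of_nonneg_right (hP2 ▸ hδ) (by positivity : 0 ≤ a₀ * t ^ 2)]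
  have hfrac : fracSq N s u = 0 := by
    have hlhs : ∫ x, (F0 f (u x) - a₀ / 2 * u x ^ 2) ≤ 0 :=
      integral_nonpos fun x => sub_nonpos.2 (hF (u x))
    nlinarith [fracSq_nonneg (s := s) u, div_pos hNs (by positivity : (0 : ℝ) < 2 * N)]
  exact ae_eq_zero_of_fracSq_eq_zero hN hu hu1 hfrac

/-- nonexistence for constant positive potential. If
`0 ≤ δ ≤ 2s/(N-2s)` and `2_s^* F(t) ≤ f(t)t + δ a₀ t²` for all `t`, then any weak
solution `u ∈ Hˢ(ℝᴺ)` of `(-Δ)ˢu + a₀ u = f(u)` satisfying the Pohozaev identity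
vanishes identically. -/
theorem nonexistence_constant_potential
    (N : ℕ) (s : ℝ) (hN : 0 < N) (hs : 0 < s) (hs1 : s < 1) (hsN : 2 * s < (N : ℝ))
    (a₀ : ℝ) (ha₀ : 0 < a₀)
    (f : ℝ → ℝ) (hf : ContDiff ℝ 1 f)
    (hgrowth : ∀ ε : ℝ, 0 < ε → ∃ C : ℝ, 0 < C ∧
      ∃ p : ℝ, 2 < p ∧ p < 2 * N / ((N : ℝ) - 2 * s) ∧ ∀ t : ℝ,
        |f t| ≤ ε * (|t| + |t| ^ (2 * N / ((N : ℝ) - 2 * s) - 1)) + C * |t| ^ (p - 1))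
    (δ : ℝ) (hδ0 : 0 ≤ δ) (hδ : δ ≤ 2 * s / ((N : ℝ) - 2 * s))
    (hineq : ∀ t : ℝ, (2 * N / ((N : ℝ) - 2 * s)) * F0 f t ≤ f t * t + δ * a₀ * t ^ 2)
    (u : Esp N → ℝ) (hu : MemHs N s u)
    (hsol : ∀ v : Esp N → ℝ, MemHs N s v →
      fracInner N s u v + a₀ * ∫ x : Esp N, u x * v x = ∫ x : Esp N, f (u x) * v x)
    (hpoh : ∫ x : Esp N, (F0 f (u x) - a₀ / 2 * u x ^ 2)
        = ((N : ℝ) - 2 * s) / (2 * N) * fracSq N s u) :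
    u =ᵐ[(volume : Measure (Esp N))] (fun _ => (0 : ℝ)) :=
  nonexistence_constant_potential_general N s hN hs hsN a₀ ha₀ f hf hgrowth δ hδ hineq u hu hsol
    hpoh
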